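/- arXiv:0902.2153 — 3 statements merged into one kernel-verified Lean document; each statement's English description precedes it below -/
import Mathlib

section
/- There exists a constant C > 0 (depending only on m, the speeds a_1,…,a_m and the vectors l_1,…,l_m) such that for every p ∈ [1,∞]: (i) for all t > 0, the L^p norm over (−∞,0] of y ↦ ∂_y e(y,t) is at most C t^{−(1/2)(1−1/p)}, and (ii) for all t ≥ 1, the L^p norm over (−∞,0] of y ↦ ∂_t e(y,t) is at most C t^{−(1/2)(1−1/p)}. (Here 1/∞ is interpreted as 0.) -/
open MeasureTheory Real Set
open scoped ENNReal

/-- errfn(z) := (1/√π) ∫_{−∞}^{z} e^{−u²} du -/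
noncomputable def errfn (z : ℝ) : ℝ :=
  (Real.sqrt Real.pi)⁻¹ * ∫ u in Set.Iic z, Real.exp (-u ^ 2)

/-- e(y,t) := Σ_{k} ( errfn((y + a_k t)/√(4t)) − errfn((y − a_k t)/√(4t)) ) l_k -/
noncomputable def eKer {n m : ℕ} (a : Fin m → ℝ) (l : Fin m → EuclideanSpace ℝ (Fin n))
    (y t : ℝ) : EuclideanSpace ℝ (Fin n) :=
  ∑ k, (errfn ((y + a k * t) / Real.sqrt (4 * t))
      - errfn ((y - a k * t) / Real.sqrt (4 * t))) • l k

/-! Differentiating the error functions turns `e` into Gaussians: with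
`z = (y ± a_k t) / √(4t)`, `∂_y e` is a sum of terms `t^{-1/2} e^{-z²} l_k` and `∂_t e` a sum
of terms `e^{-z²} (± a_k / √(4t) - z / (2t)) l_k`. Since `|z| e^{-z²} ≤ e^{-z²/2}` and
`t⁻¹ ≤ t^{-1/2}` for `t ≥ 1`, both are bounded pointwise by `t^{-1/2}` times a sum of Gaussians
`exp (-(y ± a_k t)² / (8t))`, whose `L^p(ℝ)` norm is at most `(8πt)^{1/(2p)}`; the product is
`O(t^{-(1 - 1/p)/2})`. -/

lemma hasDerivAt_errfn (z : ℝ) : HasDerivAt errfn ((√π)⁻¹ * exp (-z ^ 2)) z := by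
  have hgauss : Integrable (fun u : ℝ => exp (-u ^ 2)) := by
    simpa using integrable_exp_neg_mul_sq one_pos
  have hsplit : ∀ w, errfn w =
      (√π)⁻¹ * ((∫ u in Iic 0, exp (-u ^ 2)) + ∫ u in (0 : ℝ)..w, exp (-u ^ 2)) := fun w => by
    rw [errfn, ← intervalIntegral.integral_Iic_sub_Iic hgauss.integrableOn hgauss.integrableOn]
    ring
  have hftc : HasDerivAt (fun w => ∫ u in (0 : ℝ)..w, exp (-u ^ 2)) (exp (-z ^ 2)) z :=
    ((by fun_prop : Continuous fun u : ℝ => exp (-u ^ 2)).integral_hasStrictDerivAt 0 z).hasDerivAt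
  exact ((hftc.const_add _).const_mul _).congr_of_eventuallyEq (Filter.Eventually.of_forall hsplit)

lemma abs_mul_exp_neg_sq_le (z : ℝ) : |z| * exp (-z ^ 2) ≤ exp (-z ^ 2 / 2) := by
  have hz : |z| ≤ exp (z ^ 2 / 2) := by
    nlinarith [add_one_le_exp (z ^ 2 / 2), sq_nonneg (|z| - 1), sq_abs z]
  calc |z| * exp (-z ^ 2) ≤ exp (z ^ 2 / 2) * exp (-z ^ 2) := by gcongr
    _ = exp (-z ^ 2 / 2) := by rw [← exp_add]; ring_nf

lemma div_sqrt_four_mul_sq_div_two (x : ℝ) {t : ℝ} (ht : 0 ≤ t) :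
    (x / √(4 * t)) ^ 2 / 2 = x ^ 2 / (8 * t) := by
  rw [div_pow, sq_sqrt (by positivity)]; ring

lemma sqrt_four_mul (t : ℝ) : √(4 * t) = 2 * √t := by
  rw [sqrt_mul (by norm_num), show (4 : ℝ) = 2 ^ 2 by norm_num, sqrt_sq (by norm_num)]

noncomputable def errfnWave (c y t : ℝ) : ℝ := errfn ((y + c * t) / √(4 * t))

lemma eKer_eq_sum_errfnWave {n m : ℕ} (a : Fin m → ℝ) (l : Fin m → EuclideanSpace ℝ (Fin n))
    (y t : ℝ) : eKer a l y t = ∑ k, (errfnWave (a k) y t - errfnWave (-a k) y t) • l k := by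
  simp only [eKer, errfnWave, neg_mul, ← sub_eq_add_neg]

lemma hasDerivAt_errfnWave_space (c y t : ℝ) :
    HasDerivAt (fun y => errfnWave c y t)
      ((√π)⁻¹ * exp (-((y + c * t) / √(4 * t)) ^ 2) / √(4 * t)) y := by
  have hinner : HasDerivAt (fun y : ℝ => (y + c * t) / √(4 * t)) (1 / √(4 * t)) y :=
    ((hasDerivAt_id y).add_const _).div_const _
  exact ((hasDerivAt_errfn _).comp y hinner).congr_deriv (by ring)

lemma hasDerivAt_errfnWave_time (c y : ℝ) {t : ℝ} (ht : 0 < t) :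
    HasDerivAt (errfnWave c y)
      ((√π)⁻¹ * exp (-((y + c * t) / √(4 * t)) ^ 2) *
        (c / √(4 * t) - (y + c * t) / √(4 * t) / (2 * t))) t := by
  have hs : 0 < √(4 * t) := by positivity
  have hs2 : √(4 * t) ^ 2 = 4 * t := sq_sqrt (by positivity)
  have hsqrt : HasDerivAt (fun t : ℝ => √(4 * t)) (4 / (2 * √(4 * t))) t := by
    simpa using ((hasDerivAt_id t).const_mul 4).sqrt (by positivity)
  have hinner : HasDerivAt (fun t : ℝ => (y + c * t) / √(4 * t))
      (c / √(4 * t) - (y + c * t) / √(4 * t) / (2 * t)) t := by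
    refine ((((hasDerivAt_id t).const_mul c).const_add y).div hsqrt hs.ne').congr_deriv ?_
    field_simp
    simp only [hs2, id]
    ring
  exact (hasDerivAt_errfn _).comp t hinner

lemma abs_deriv_errfnWave_space_le (c y : ℝ) {t : ℝ} (ht : 0 < t) :
    |deriv (fun y => errfnWave c y t) y| ≤
      (√π)⁻¹ / 2 * (√t)⁻¹ * exp (-(y + c * t) ^ 2 / (8 * t)) := by
  rw [(hasDerivAt_errfnWave_space c y t).deriv]
  set z := (y + c * t) / √(4 * t)
  have hz : -z ^ 2 / 2 = -(y + c * t) ^ 2 / (8 * t) := by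
    rw [neg_div, div_sqrt_four_mul_sq_div_two _ ht.le, neg_div]
  rw [← hz, abs_of_nonneg (by positivity), sqrt_four_mul]
  calc (√π)⁻¹ * exp (-z ^ 2) / (2 * √t) ≤ (√π)⁻¹ * exp (-z ^ 2 / 2) / (2 * √t) := by
        gcongr; nlinarith [sq_nonneg z]
    _ = _ := by ring

lemma abs_deriv_errfnWave_time_le (c y : ℝ) {t : ℝ} (ht : 1 ≤ t) :
    |deriv (errfnWave c y) t| ≤
      (√π)⁻¹ * (|c| + 1) / 2 * (√t)⁻¹ * exp (-(y + c * t) ^ 2 / (8 * t)) := by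
  have ht0 : 0 < t := by linarith
  rw [(hasDerivAt_errfnWave_time c y ht0).deriv]
  set z := (y + c * t) / √(4 * t)
  have hz : -z ^ 2 / 2 = -(y + c * t) ^ 2 / (8 * t) := by
    rw [neg_div, div_sqrt_four_mul_sq_div_two _ ht0.le, neg_div]
  have hfactor : |c / √(4 * t) - z / (2 * t)| ≤ (|c| + |z|) / (2 * √t) := by
    have hsqrt_le : √t ≤ t := by nlinarith [sq_sqrt ht0.le, one_le_sqrt.mpr ht]
    rw [sqrt_four_mul]
    calc |c / (2 * √t) - z / (2 * t)| ≤ |c| / (2 * √t) + |z| / (2 * t) := by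
          simpa [abs_div, abs_of_pos ht0, abs_of_pos (sqrt_pos.mpr ht0)] using
            abs_sub (c / (2 * √t)) (z / (2 * t))
      _ ≤ |c| / (2 * √t) + |z| / (2 * √t) := by gcongr
      _ = _ := by ring
  rw [← hz, abs_mul, abs_of_nonneg (by positivity)]
  calc (√π)⁻¹ * exp (-z ^ 2) * |c / √(4 * t) - z / (2 * t)|
      ≤ (√π)⁻¹ * exp (-z ^ 2) * ((|c| + |z|) / (2 * √t)) := by gcongr
    _ = (√π)⁻¹ * (|c| * exp (-z ^ 2) + |z| * exp (-z ^ 2)) / (2 * √t) := by ring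
    _ ≤ (√π)⁻¹ * (|c| * exp (-z ^ 2 / 2) + exp (-z ^ 2 / 2)) / (2 * √t) := by
        gcongr
        · nlinarith [sq_nonneg z]
        · exact abs_mul_exp_neg_sq_le z
    _ = _ := by ring

lemma norm_deriv_sum_sub_smul_le {ι E : Type*} [Fintype ι] [NormedAddCommGroup E]
    [NormedSpace ℝ E] {u v : ι → ℝ → ℝ} {x : ℝ} (hu : ∀ k, DifferentiableAt ℝ (u k) x)
    (hv : ∀ k, DifferentiableAt ℝ (v k) x) (l : ι → E) :
    ‖deriv (fun s => ∑ k, (u k s - v k s) • l k) x‖ ≤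
      ∑ k, (|deriv (u k) x| + |deriv (v k) x|) * ‖l k‖ := by
  have hdiff : ∀ k, DifferentiableAt ℝ (fun s => u k s - v k s) x := fun k => (hu k).sub (hv k)
  rw [deriv_fun_sum fun k _ => (hdiff k).smul_const (l k)]
  refine (norm_sum_le _ _).trans (Finset.sum_le_sum fun k _ => ?_)
  rw [deriv_smul_const (hdiff k), norm_smul, Real.norm_eq_abs, deriv_fun_sub (hu k) (hv k)]
  gcongr
  exact abs_sub _ _

section eKer

variable {n m : ℕ} (a : Fin m → ℝ) (l : Fin m → EuclideanSpace ℝ (Fin n))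

lemma norm_deriv_eKer_space_le {t : ℝ} (ht : 0 < t) (y : ℝ) :
    ‖deriv (fun y => eKer a l y t) y‖ ≤ (√t)⁻¹ * ∑ k, (√π)⁻¹ / 2 * ‖l k‖ *
      (exp (-(y + a k * t) ^ 2 / (8 * t)) + exp (-(y + -a k * t) ^ 2 / (8 * t))) := by
  simp_rw [eKer_eq_sum_errfnWave]
  refine (norm_deriv_sum_sub_smul_le
    (fun k => (hasDerivAt_errfnWave_space (a k) y t).differentiableAt)
    (fun k => (hasDerivAt_errfnWave_space (-a k) y t).differentiableAt) l).trans ?_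
  rw [Finset.mul_sum]
  refine Finset.sum_le_sum fun k _ => ?_
  calc _ ≤ ((√π)⁻¹ / 2 * (√t)⁻¹ * exp (-(y + a k * t) ^ 2 / (8 * t)) +
          (√π)⁻¹ / 2 * (√t)⁻¹ * exp (-(y + -a k * t) ^ 2 / (8 * t))) * ‖l k‖ := by
        gcongr
        exacts [abs_deriv_errfnWave_space_le _ y ht, abs_deriv_errfnWave_space_le _ y ht]
    _ = _ := by ring

lemma norm_deriv_eKer_time_le (y : ℝ) {t : ℝ} (ht : 1 ≤ t) :
    ‖deriv (fun t => eKer a l y t) t‖ ≤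
      (√t)⁻¹ * ∑ k, (√π)⁻¹ * (|a k| + 1) / 2 * ‖l k‖ *
        (exp (-(y + a k * t) ^ 2 / (8 * t)) + exp (-(y + -a k * t) ^ 2 / (8 * t))) := by
  have ht0 : 0 < t := by linarith
  simp_rw [eKer_eq_sum_errfnWave]
  refine (norm_deriv_sum_sub_smul_le
    (fun k => (hasDerivAt_errfnWave_time (a k) y ht0).differentiableAt)
    (fun k => (hasDerivAt_errfnWave_time (-a k) y ht0).differentiableAt) l).trans ?_
  rw [Finset.mul_sum]
  refine Finset.sum_le_sum fun k _ => ?_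
  calc _ ≤ ((√π)⁻¹ * (|a k| + 1) / 2 * (√t)⁻¹ * exp (-(y + a k * t) ^ 2 / (8 * t)) +
        (√π)⁻¹ * (|a k| + 1) / 2 * (√t)⁻¹ * exp (-(y + -a k * t) ^ 2 / (8 * t))) * ‖l k‖ := by
        gcongr
        exacts [abs_deriv_errfnWave_time_le _ y ht,
          by simpa only [abs_neg] using abs_deriv_errfnWave_time_le (-a k) y ht]
    _ = _ := by ring

end eKer

lemma eLpNorm_exp_neg_sq_div_le {s : ℝ} (hs : 0 < s) (b : ℝ) {p : ℝ≥0∞} (hp : 1 ≤ p) :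
    eLpNorm (fun y => exp (-(y + b) ^ 2 / s)) p volume ≤
      ENNReal.ofReal ((π * s) ^ (2 * p.toReal)⁻¹) := by
  refine (eLpNorm_comp_measurePreserving (g := fun y => exp (-y ^ 2 / s))
    (by fun_prop : Continuous _).aestronglyMeasurable
    (measurePreserving_add_right volume b)).le.trans ?_
  rcases eq_or_ne p ∞ with rfl | hp_top
  · refine (eLpNorm_le_of_ae_bound (C := 1) (ae_of_all _ fun y => ?_)).trans (by simp)
    rw [norm_of_nonneg (exp_nonneg _), exp_le_one_iff, neg_div, neg_nonpos]
    positivity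
  rw [eLpNorm_eq_lintegral_rpow_enorm_toReal (by positivity) hp_top]
  set q := p.toReal
  have hq : 1 ≤ q := by simpa using ENNReal.toReal_mono hp_top hp
  have hgauss : Integrable (fun y : ℝ => exp (-(q / s) * y ^ 2)) :=
    integrable_exp_neg_mul_sq (by positivity)
  have henorm : ∀ y : ℝ,
      ‖exp (-y ^ 2 / s)‖ₑ ^ q = ENNReal.ofReal (exp (-(q / s) * y ^ 2)) := fun y => by
    rw [Real.enorm_eq_ofReal (exp_nonneg _), ENNReal.ofReal_rpow_of_nonneg (exp_nonneg _)
      (by positivity), ← exp_mul]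
    ring_nf
  simp only [henorm]
  rw [← ofReal_integral_eq_lintegral_ofReal hgauss (ae_of_all _ fun y => exp_nonneg _),
    integral_gaussian, ENNReal.ofReal_rpow_of_nonneg (sqrt_nonneg _) (by positivity)]
  gcongr
  calc √(π / (q / s)) ^ (1 / q) ≤ √(π * s) ^ (1 / q) := by
        gcongr
        rw [div_div_eq_mul_div, mul_div_assoc]
        exact mul_le_mul_of_nonneg_left (div_le_self hs.le hq) pi_pos.le
    _ = (π * s) ^ (2 * q)⁻¹ := by
        rw [sqrt_eq_rpow, ← rpow_mul (by positivity)]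
        ring_nf

lemma eLpNorm_restrict_le_of_norm_le_gaussians {ι E : Type*} [Fintype ι] [NormedAddCommGroup E]
    {f : ℝ → E} {w b c : ι → ℝ} {t : ℝ} (ht : 0 < t) (hw : ∀ k, 0 ≤ w k)
    (hf : ∀ y, ‖f y‖ ≤ (√t)⁻¹ * ∑ k, w k *
      (exp (-(y + b k) ^ 2 / (8 * t)) + exp (-(y + c k) ^ 2 / (8 * t))))
    (S : Set ℝ) {p : ℝ≥0∞} (hp : 1 ≤ p) :
    eLpNorm f p (volume.restrict S) ≤
      ENNReal.ofReal (16 * π * (∑ k, w k) * t ^ (-(1 / 2 : ℝ) * (1 - p.toReal⁻¹))) := by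
  set G : ℝ → ℝ → ℝ := fun d y => exp (-(y + d) ^ 2 / (8 * t))
  set e := (2 * p.toReal)⁻¹
  have he : e ≤ 1 := by
    rcases eq_or_ne p ∞ with rfl | hp_top
    · simp [e]
    · have hq : 1 ≤ p.toReal := by simpa using ENNReal.toReal_mono hp_top hp
      exact inv_le_one_of_one_le₀ (by linarith)
  have hG : ∀ d, eLpNorm (G d) p volume ≤ ENNReal.ofReal (8 * π * t ^ e) := fun d => by
    refine (eLpNorm_exp_neg_sq_div_le (by positivity) d hp).trans (ENNReal.ofReal_le_ofReal ?_)
    rw [← mul_assoc, mul_comm π, mul_rpow (by positivity) ht.le]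
    gcongr
    exact rpow_le_self_of_one_le (by nlinarith [pi_gt_three]) he
  have hGmeas : ∀ d, AEStronglyMeasurable (G d) volume :=
    fun d => (by fun_prop : Continuous (G d)).aestronglyMeasurable
  have hexp : (√t)⁻¹ * t ^ e = t ^ (-(1 / 2 : ℝ) * (1 - p.toReal⁻¹)) := by
    rw [sqrt_eq_rpow, ← rpow_neg ht.le, ← rpow_add ht]
    congr 1
    simp only [e, mul_inv]
    ring
  calc eLpNorm f p (volume.restrict S) ≤ eLpNorm f p volume :=
        eLpNorm_mono_measure _ Measure.restrict_le_self
    _ ≤ eLpNorm (∑ k, ((√t)⁻¹ * w k) • (G (b k) + G (c k))) p volume :=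
        eLpNorm_mono_real fun y => (hf y).trans_eq <| by
          simp [G, Finset.mul_sum, mul_add, mul_assoc]
    _ ≤ ∑ k, eLpNorm (((√t)⁻¹ * w k) • (G (b k) + G (c k))) p volume :=
        eLpNorm_sum_le (fun k _ => ((hGmeas _).add (hGmeas _)).const_smul _) hp
    _ ≤ ∑ k, ENNReal.ofReal ((√t)⁻¹ * w k) * (2 * ENNReal.ofReal (8 * π * t ^ e)) := by
        gcongr with k
        rw [eLpNorm_const_smul, Real.enorm_eq_ofReal (mul_nonneg (by positivity) (hw k)), two_mul]
        gcongr
        exact (eLpNorm_add_le (hGmeas _) (hGmeas _) hp).trans (add_le_add (hG _) (hG _))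
    _ = _ := by
        have hw' : ∀ k ∈ Finset.univ, 0 ≤ (√t)⁻¹ * w k :=
          fun k _ => mul_nonneg (by positivity) (hw k)
        rw [← Finset.sum_mul, ← ENNReal.ofReal_sum_of_nonneg hw', ← ENNReal.ofReal_ofNat 2,
          ← ENNReal.ofReal_mul zero_le_two, ← ENNReal.ofReal_mul (Finset.sum_nonneg hw'),
          ← hexp, ← Finset.mul_sum]
        ring_nf

theorem stmt0_general {n m : ℕ} (a : Fin m → ℝ)
    (l : Fin m → EuclideanSpace ℝ (Fin n)) :
    ∃ C : ℝ, 0 < C ∧ ∀ p : ℝ≥0∞, 1 ≤ p →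
      (∀ t : ℝ, 0 < t →
        eLpNorm (fun y => deriv (fun y' => eKer a l y' t) y) p
            (volume.restrict (Set.Iic (0 : ℝ)))
          ≤ ENNReal.ofReal (C * t ^ (-(1 / 2 : ℝ) * (1 - (p.toReal)⁻¹)))) ∧
      (∀ t : ℝ, 1 ≤ t →
        eLpNorm (fun y => deriv (fun t' => eKer a l y t') t) p
            (volume.restrict (Set.Iic (0 : ℝ)))
          ≤ ENNReal.ofReal (C * t ^ (-(1 / 2 : ℝ) * (1 - (p.toReal)⁻¹)))) := by
  set w : Fin m → ℝ := fun k => (√π)⁻¹ * (|a k| + 1) / 2 * ‖l k‖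
  have hw : ∀ k, 0 ≤ w k := fun k => by positivity
  refine ⟨16 * π * ∑ k, w k + 1, by positivity, fun p hp => ⟨fun t ht => ?_, fun t ht => ?_⟩⟩
  · refine (eLpNorm_restrict_le_of_norm_le_gaussians ht (fun k => by positivity)
      (norm_deriv_eKer_space_le a l ht) _ hp).trans (ENNReal.ofReal_le_ofReal ?_)
    gcongr ?_ * _
    refine le_add_of_le_of_nonneg ?_ zero_le_one
    gcongr with k
    simp only [w]
    gcongr
    exact le_mul_of_one_le_right (by positivity) (by linarith [abs_nonneg (a k)])
  · exact (eLpNorm_restrict_le_of_norm_le_gaussians (by linarith) hw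
      (fun y => norm_deriv_eKer_time_le a l y ht) _ hp).trans
      (ENNReal.ofReal_le_ofReal (by gcongr; linarith))

theorem stmt0 {n m : ℕ} (hm : 1 ≤ m) (a : Fin m → ℝ) (ha : ∀ k, 0 < a k)
    (l : Fin m → EuclideanSpace ℝ (Fin n)) :
    ∃ C : ℝ, 0 < C ∧ ∀ p : ℝ≥0∞, 1 ≤ p →
      (∀ t : ℝ, 0 < t →
        eLpNorm (fun y => deriv (fun y' => eKer a l y' t) y) p
            (volume.restrict (Set.Iic (0 : ℝ)))
          ≤ ENNReal.ofReal (C * t ^ (-(1 / 2 : ℝ) * (1 - (p.toReal)⁻¹)))) ∧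
      (∀ t : ℝ, 1 ≤ t →
        eLpNorm (fun y => deriv (fun t' => eKer a l y t') t) p
            (volume.restrict (Set.Iic (0 : ℝ)))
          ≤ ENNReal.ofReal (C * t ^ (-(1 / 2 : ℝ) * (1 - (p.toReal)⁻¹)))) :=
  stmt0_general a l
end

section
/- Fix constants a > 0, b ≠ 0, and M, η > 0. For t > 0 define the kernel K_t(x,y) := 1_{{a t ≥ |y|}} · t^{−1/2} e^{−(x − b(t − |y|/a))²/(M t)} · e^{−η max(x,0)} for x ∈ ℝ and y ≤ 0. Then for every pair of exponents 1 ≤ q ≤ p ≤ ∞ there exists C > 0 such that for all t > 0 and all f ∈ L^q((−∞,0]), ‖∫_{−∞}^0 K_t(·,y) f(y) dy‖_{L^p(ℝ)} ≤ C t^{−(1/2)(1/q − 1/p)} ‖f‖_{L^q((−∞,0])}. -/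
/-!
For `y ≤ 0` the kernel is dominated by the heat kernel `φ_t(z) = t^{-1/2} e^{-z²/(M t)}`
evaluated at `x - (b/a) y - b t`, so the operator is bounded by a convolution of `φ_t(· - b t)`
with `|f|` stretched by the factor `b/a`. Young's inequality for such dilated convolutions
(Hölder with three factors when `p < ∞`, plain Hölder when `p = ∞`) bounds it by
`|a/b|^{1 - 1/q} ‖φ_t‖_r ‖f‖_q` with `1/q + 1/r = 1 + 1/p`, and parabolic scaling gives
`‖φ_t‖_r = t^{-(1 - 1/r)/2} ‖φ_1‖_r = t^{-(1/q - 1/p)/2} ‖φ_1‖_r`.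
-/

open MeasureTheory Real Set
open scoped ENNReal

theorem Real.map_volume_mul_add {c : ℝ} (hc : c ≠ 0) (d : ℝ) :
    Measure.map (fun y => c * y + d) volume = ENNReal.ofReal |c|⁻¹ • volume := by
  have : (fun y : ℝ => c * y + d) = (· + d) ∘ (c * ·) := rfl
  rw [this, ← Measure.map_map (by fun_prop) (by fun_prop), Real.map_volume_mul_left hc,
    Measure.map_smul, map_add_right_eq_self, abs_inv]

theorem lintegral_comp_mul_add {c : ℝ} (hc : c ≠ 0) (d : ℝ) {F : ℝ → ℝ≥0∞}
    (hF : Measurable F) :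
    ∫⁻ y, F (c * y + d) = ENNReal.ofReal |c|⁻¹ * ∫⁻ y, F y := by
  rw [← lintegral_map hF (by fun_prop), Real.map_volume_mul_add hc, lintegral_smul_measure,
    smul_eq_mul]

theorem eLpNorm_comp_mul_add {E : Type*} [NormedAddCommGroup E] {c : ℝ} (hc : c ≠ 0) (d : ℝ)
    {f : ℝ → E} (hf : AEStronglyMeasurable f) (p : ℝ≥0∞) :
    eLpNorm (fun y => f (c * y + d)) p volume
      = ENNReal.ofReal |c|⁻¹ ^ p.toReal⁻¹ * eLpNorm f p volume := by
  have hf' : AEStronglyMeasurable f (Measure.map (fun y => c * y + d) volume) := by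
    rw [Real.map_volume_mul_add hc]; exact hf.smul_measure _
  rw [← Function.comp_def, ← eLpNorm_map_measure hf' (by fun_prop), Real.map_volume_mul_add hc,
    eLpNorm_smul_measure_of_ne_zero (by simpa using hc), one_div, ENNReal.toReal_inv,
    smul_eq_mul]

theorem lintegral_lintegral_comp_sub_mul (c : ℝ) {F G : ℝ → ℝ≥0∞} (hF : Measurable F)
    (hG : Measurable G) :
    ∫⁻ x, ∫⁻ y, F (x - c * y) * G y = (∫⁻ x, F x) * ∫⁻ y, G y := by
  rw [lintegral_lintegral_swap (by fun_prop)]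
  have hx (y : ℝ) : ∫⁻ x, F (x - c * y) * G y = (∫⁻ x, F x) * G y := by
    rw [lintegral_mul_const _ (by fun_prop), lintegral_sub_right_eq_self F]
  simp_rw [hx, lintegral_const_mul _ hG]

theorem ENNReal.rpow_mul_rpow_mul_rpow_eq {v w : ℝ≥0∞} {P Q R : ℝ} (hP : 0 < P) (hQ : 0 < Q)
    (hR : 0 < R) (hPR : P⁻¹ ≤ R⁻¹) (hPQ : P⁻¹ ≤ Q⁻¹) :
    (v ^ R * w ^ Q) ^ P⁻¹ * ((v ^ R) ^ (R⁻¹ - P⁻¹) * (w ^ Q) ^ (Q⁻¹ - P⁻¹)) = v * w := by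
  have split {u : ℝ≥0∞} {S : ℝ} (hS : 0 < S) (hPS : P⁻¹ ≤ S⁻¹) :
      u ^ (S * P⁻¹) * u ^ (S * (S⁻¹ - P⁻¹)) = u := by
    rw [← ENNReal.rpow_add_of_nonneg _ _ (by positivity) (mul_nonneg hS.le (by linarith)),
      mul_sub, mul_inv_cancel₀ hS.ne', add_sub_cancel, ENNReal.rpow_one]
  rw [ENNReal.mul_rpow_of_nonneg _ _ (by positivity), ← ENNReal.rpow_mul, ← ENNReal.rpow_mul,
    ← ENNReal.rpow_mul, ← ENNReal.rpow_mul, mul_mul_mul_comm, split hR hPR, split hQ hPQ]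

theorem ENNReal.lintegral_mul_le_young {α : Type*} [MeasurableSpace α] {μ : Measure α}
    {F G : α → ℝ≥0∞} (hF : AEMeasurable F μ) (hG : AEMeasurable G μ) {P Q R : ℝ}
    (hP : 0 < P) (hQ : 0 < Q) (hR : 0 < R) (hPR : P⁻¹ ≤ R⁻¹) (hPQ : P⁻¹ ≤ Q⁻¹)
    (hPQR : Q⁻¹ + R⁻¹ = 1 + P⁻¹) :
    ∫⁻ a, F a * G a ∂μ ≤ (∫⁻ a, F a ^ R * G a ^ Q ∂μ) ^ P⁻¹
      * (∫⁻ a, F a ^ R ∂μ) ^ (R⁻¹ - P⁻¹) * (∫⁻ a, G a ^ Q ∂μ) ^ (Q⁻¹ - P⁻¹) := by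
  have H := ENNReal.lintegral_prod_norm_pow_le (μ := μ) Finset.univ
    (f := ![fun a => F a ^ R * G a ^ Q, fun a => F a ^ R, fun a => G a ^ Q])
    (p := ![P⁻¹, R⁻¹ - P⁻¹, Q⁻¹ - P⁻¹])
    (fun i _ => by fin_cases i <;> simp <;> fun_prop)
    (by simp [Fin.sum_univ_three]; linarith)
    (fun i _ => by fin_cases i <;> simp <;> linarith [inv_pos.2 hP])
  simp only [Fin.prod_univ_three] at H
  simpa [mul_assoc, ENNReal.rpow_mul_rpow_mul_rpow_eq hP hQ hR hPR hPQ] using H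

theorem lintegral_lintegral_comp_sub_mul_rpow_le {c : ℝ} (hc : c ≠ 0) {F G : ℝ → ℝ≥0∞}
    (hF : Measurable F) (hG : Measurable G) {P Q R : ℝ} (hP : 0 < P) (hQ : 0 < Q) (hR : 0 < R)
    (hPR : P⁻¹ ≤ R⁻¹) (hPQ : P⁻¹ ≤ Q⁻¹) (hPQR : Q⁻¹ + R⁻¹ = 1 + P⁻¹) :
    (∫⁻ x, (∫⁻ y, F (x - c * y) * G y) ^ P) ^ P⁻¹
      ≤ ENNReal.ofReal |c|⁻¹ ^ (1 - Q⁻¹) * (∫⁻ z, F z ^ R) ^ R⁻¹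
        * (∫⁻ y, G y ^ Q) ^ Q⁻¹ := by
  set A := ∫⁻ z, F z ^ R
  set B := ∫⁻ y, G y ^ Q
  set K := (ENNReal.ofReal |c|⁻¹ * A) ^ (R⁻¹ - P⁻¹) * B ^ (Q⁻¹ - P⁻¹) with hK
  have hcomp (x : ℝ) : ∫⁻ y, F (x - c * y) ^ R = ENNReal.ofReal |c|⁻¹ * A := by
    simp_rw [sub_eq_add_neg x, add_comm x, ← neg_mul]
    rw [lintegral_comp_mul_add (neg_ne_zero.2 hc) x (hF.pow_const R), abs_neg]
  have pointwise (x : ℝ) :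
      (∫⁻ y, F (x - c * y) * G y) ^ P ≤ (∫⁻ y, F (x - c * y) ^ R * G y ^ Q) * K ^ P := by
    calc (∫⁻ y, F (x - c * y) * G y) ^ P
        ≤ ((∫⁻ y, F (x - c * y) ^ R * G y ^ Q) ^ P⁻¹ * K) ^ P := by
          gcongr
          rw [hK, ← hcomp x, ← mul_assoc]
          exact ENNReal.lintegral_mul_le_young (by fun_prop) hG.aemeasurable hP hQ hR hPR hPQ hPQR
      _ = (∫⁻ y, F (x - c * y) ^ R * G y ^ Q) * K ^ P := by
          rw [ENNReal.mul_rpow_of_nonneg _ _ hP.le, ← ENNReal.rpow_mul, inv_mul_cancel₀ hP.ne',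
            ENNReal.rpow_one]
  calc (∫⁻ x, (∫⁻ y, F (x - c * y) * G y) ^ P) ^ P⁻¹
      ≤ (∫⁻ x, (∫⁻ y, F (x - c * y) ^ R * G y ^ Q) * K ^ P) ^ P⁻¹ := by
        gcongr with x
        exact pointwise x
    _ = (A * B) ^ P⁻¹ * K := by
        have hmeas : Measurable fun x => ∫⁻ y, F (x - c * y) ^ R * G y ^ Q :=
          Measurable.lintegral_prod_right'
            (f := fun z : ℝ × ℝ => F (z.1 - c * z.2) ^ R * G z.2 ^ Q) (by fun_prop)
        rw [lintegral_mul_const _ hmeas,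
          lintegral_lintegral_comp_sub_mul c (hF.pow_const R) (hG.pow_const Q),
          ENNReal.mul_rpow_of_nonneg _ _ (inv_pos.2 hP).le, ← ENNReal.rpow_mul,
          mul_inv_cancel₀ hP.ne', ENNReal.rpow_one]
    _ = ENNReal.ofReal |c|⁻¹ ^ (R⁻¹ - P⁻¹) * (A ^ P⁻¹ * A ^ (R⁻¹ - P⁻¹))
          * (B ^ P⁻¹ * B ^ (Q⁻¹ - P⁻¹)) := by
        rw [hK, ENNReal.mul_rpow_of_nonneg _ _ (sub_nonneg.2 hPR),
          ENNReal.mul_rpow_of_nonneg _ _ (inv_pos.2 hP).le]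
        ring
    _ = _ := by
        rw [← ENNReal.rpow_add_of_nonneg _ _ (inv_pos.2 hP).le (sub_nonneg.2 hPR),
          ← ENNReal.rpow_add_of_nonneg _ _ (inv_pos.2 hP).le (sub_nonneg.2 hPQ),
          add_sub_cancel, add_sub_cancel, show R⁻¹ - P⁻¹ = 1 - Q⁻¹ by linarith]

theorem ENNReal.toReal_inv_add_toReal_inv_eq {p q r : ℝ≥0∞} (hq : q ≠ 0) (hr : r ≠ 0)
    (hpqr : q⁻¹ + r⁻¹ = 1 + p⁻¹) : q.toReal⁻¹ + r.toReal⁻¹ = 1 + p.toReal⁻¹ := by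
  have hp : p⁻¹ ≠ ∞ := fun h => by simp [h, ENNReal.add_eq_top, hq, hr] at hpqr
  simpa [ENNReal.toReal_add, hq, hr, hp] using congrArg ENNReal.toReal hpqr

theorem ENNReal.toReal_inv_le_one {s : ℝ≥0∞} (hs : 1 ≤ s) : s.toReal⁻¹ ≤ 1 := by
  rw [← ENNReal.toReal_inv]
  exact ENNReal.toReal_le_of_le_ofReal zero_le_one (by simpa using ENNReal.inv_le_one.2 hs)

theorem lintegral_enorm_comp_sub_mul_mul_le {φ g : ℝ → ℝ} (hφ : Measurable φ)
    (hg : AEStronglyMeasurable g) {c : ℝ} (hc : c ≠ 0) {q r : ℝ≥0∞}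
    [ENNReal.HolderConjugate r q] (x : ℝ) :
    ∫⁻ y, ‖φ (x - c * y)‖ₑ * ‖g y‖ₑ
      ≤ ENNReal.ofReal |c|⁻¹ ^ r.toReal⁻¹ * eLpNorm φ r volume * eLpNorm g q volume := by
  have hshift : (fun y => φ (x - c * y)) = fun y => φ (-c * y + x) := by ext y; ring_nf
  calc ∫⁻ y, ‖φ (x - c * y)‖ₑ * ‖g y‖ₑ
      = eLpNorm (fun y => φ (x - c * y) * g y) 1 volume := by
        simp [eLpNorm_one_eq_lintegral_enorm, enorm_mul]
    _ ≤ eLpNorm (fun y => φ (x - c * y)) r volume * eLpNorm g q volume := by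
        simpa using eLpNorm_le_eLpNorm_mul_eLpNorm'_of_norm (μ := volume)
          (by fun_prop : Measurable fun y => φ (x - c * y)).aestronglyMeasurable hg (· * ·) 1
          (by simp [norm_mul])
    _ = _ := by
        rw [hshift, eLpNorm_comp_mul_add (neg_ne_zero.2 hc) x hφ.aestronglyMeasurable, abs_neg]

theorem eLpNorm_lintegral_comp_sub_mul_le {φ g : ℝ → ℝ} (hφ : Measurable φ)
    (hg : AEStronglyMeasurable g) {c : ℝ} (hc : c ≠ 0) {p q r : ℝ≥0∞} (hq : 1 ≤ q) (hr : 1 ≤ r)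
    (hpqr : q⁻¹ + r⁻¹ = 1 + p⁻¹) :
    eLpNorm (fun x => ∫⁻ y, ‖φ (x - c * y)‖ₑ * ‖g y‖ₑ) p volume
      ≤ ENNReal.ofReal |c|⁻¹ ^ (1 - q.toReal⁻¹) * eLpNorm φ r volume * eLpNorm g q volume := by
  wlog hgm : StronglyMeasurable g generalizing g
  · have hmk (x : ℝ) :
        ∫⁻ y, ‖φ (x - c * y)‖ₑ * ‖g y‖ₑ = ∫⁻ y, ‖φ (x - c * y)‖ₑ * ‖hg.mk g y‖ₑ :=
      lintegral_congr_ae (by filter_upwards [hg.ae_eq_mk] with y hy; rw [hy])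
    simpa only [hmk, eLpNorm_congr_ae hg.ae_eq_mk] using
      this hg.stronglyMeasurable_mk.aestronglyMeasurable hg.stronglyMeasurable_mk
  have hq0 : q ≠ 0 := (zero_lt_one.trans_le hq).ne'
  have hr0 : r ≠ 0 := (zero_lt_one.trans_le hr).ne'
  have hPQR := ENNReal.toReal_inv_add_toReal_inv_eq hq0 hr0 hpqr
  rcases eq_or_ne p ∞ with rfl | hp_top
  · have : ENNReal.HolderConjugate r q := ⟨by rw [add_comm, hpqr]; simp⟩
    rw [eLpNorm_exponent_top, show 1 - q.toReal⁻¹ = r.toReal⁻¹ by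
      simp only [ENNReal.toReal_top, inv_zero, add_zero] at hPQR; linarith]
    exact essSup_le_of_ae_le _ (Filter.Eventually.of_forall
      (lintegral_enorm_comp_sub_mul_mul_le hφ hg hc))
  have hp0 : p ≠ 0 := by rintro rfl; simp [ENNReal.add_eq_top, hq0, hr0] at hpqr
  have hP : 0 < p.toReal := ENNReal.toReal_pos hp0 hp_top
  have hPQ : p.toReal⁻¹ ≤ q.toReal⁻¹ := by linarith [ENNReal.toReal_inv_le_one hr]
  have hPR : p.toReal⁻¹ ≤ r.toReal⁻¹ := by linarith [ENNReal.toReal_inv_le_one hq]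
  have hQ : 0 < q.toReal := inv_pos.1 ((inv_pos.2 hP).trans_le hPQ)
  have hR : 0 < r.toReal := inv_pos.1 ((inv_pos.2 hP).trans_le hPR)
  rw [eLpNorm_eq_lintegral_rpow_enorm_toReal hp0 hp_top,
    eLpNorm_eq_lintegral_rpow_enorm_toReal hr0 (ENNReal.toReal_pos_iff.1 hR).2.ne,
    eLpNorm_eq_lintegral_rpow_enorm_toReal hq0 (ENNReal.toReal_pos_iff.1 hQ).2.ne]
  simp only [enorm_eq_self, one_div]
  exact lintegral_lintegral_comp_sub_mul_rpow_le hc hφ.enorm hgm.measurable.enorm hP hQ hR hPR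
    hPQ hPQR

noncomputable def heatKernel (M t z : ℝ) : ℝ := t ^ (-(1 / 2) : ℝ) * exp (-z ^ 2 / (M * t))

theorem continuous_heatKernel (M t : ℝ) : Continuous (heatKernel M t) := by
  unfold heatKernel; fun_prop

theorem heatKernel_nonneg {t : ℝ} (ht : 0 ≤ t) (M z : ℝ) : 0 ≤ heatKernel M t z := by
  unfold heatKernel; positivity

theorem heatKernel_pos {t : ℝ} (ht : 0 < t) (M z : ℝ) : 0 < heatKernel M t z := by
  unfold heatKernel; positivity

theorem heatKernel_eq_mul_heatKernel_one {t : ℝ} (ht : 0 < t) (M z : ℝ) :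
    heatKernel M t z = t ^ (-(1 / 2) : ℝ) * heatKernel M 1 (t ^ (-(1 / 2) : ℝ) * z) := by
  have hsq : (t ^ (-(1 / 2) : ℝ)) ^ 2 = t⁻¹ := by
    rw [← Real.rpow_mul_natCast ht.le]; norm_num [Real.rpow_neg_one]
  rw [heatKernel, heatKernel, Real.one_rpow, one_mul, mul_one, mul_pow, hsq]
  field_simp

theorem eLpNorm_heatKernel_comp_sub {t : ℝ} (ht : 0 < t) (M s : ℝ) (r : ℝ≥0∞) :
    eLpNorm (fun z => heatKernel M t (z - s)) r volume
      = ENNReal.ofReal (t ^ (-(1 / 2) * (1 - r.toReal⁻¹)))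
        * eLpNorm (heatKernel M 1) r volume := by
  set τ := t ^ (-(1 / 2) : ℝ) with hτ_def
  have hτ : 0 < τ := by positivity
  have hfun :
      (fun z => heatKernel M t (z - s)) = τ • fun z => heatKernel M 1 (τ * z + -(τ * s)) := by
    ext z
    rw [Pi.smul_apply, smul_eq_mul, heatKernel_eq_mul_heatKernel_one ht, mul_sub, sub_eq_add_neg]
  rw [hfun, eLpNorm_const_smul,
    eLpNorm_comp_mul_add hτ.ne' _ (continuous_heatKernel M 1).aestronglyMeasurable, ← mul_assoc,
    Real.enorm_of_nonneg hτ.le, abs_of_pos hτ,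
    ENNReal.ofReal_rpow_of_nonneg (by positivity) (by positivity), ← ENNReal.ofReal_mul hτ.le,
    hτ_def, ← Real.rpow_neg_one, ← Real.rpow_mul ht.le, ← Real.rpow_mul ht.le, ← Real.rpow_add ht]
  ring_nf

theorem memLp_heatKernel {M t : ℝ} (hM : 0 < M) (ht : 0 < t) (r : ℝ≥0∞) :
    MemLp (heatKernel M t) r volume := by
  have hmeas := (continuous_heatKernel M t).aestronglyMeasurable (μ := volume)
  rcases eq_or_ne r 0 with rfl | hr0
  · exact memLp_zero_iff_aestronglyMeasurable.2 hmeas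
  rcases eq_or_ne r ∞ with rfl | hr_top
  · refine memLp_top_of_bound hmeas (t ^ (-(1 / 2) : ℝ))
      (Filter.Eventually.of_forall fun z => ?_)
    rw [Real.norm_of_nonneg (heatKernel_pos ht M z).le, heatKernel]
    refine mul_le_of_le_one_right (by positivity) (exp_le_one_iff.2 ?_)
    rw [neg_div]; exact neg_nonpos.2 (by positivity)
  refine (integrable_norm_rpow_iff hmeas hr0 hr_top).1 ?_
  have hR : 0 < r.toReal := ENNReal.toReal_pos hr0 hr_top
  have h (z : ℝ) : ‖heatKernel M t z‖ ^ r.toReal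
      = t ^ (-(1 / 2) * r.toReal) * exp (-(r.toReal / (M * t)) * z ^ 2) := by
    rw [Real.norm_of_nonneg (heatKernel_pos ht M z).le, heatKernel,
      Real.mul_rpow (by positivity) (exp_pos _).le, ← Real.rpow_mul ht.le, ← Real.exp_mul]
    congr 2; ring
  simp_rw [h]
  exact (integrable_exp_neg_mul_sq (by positivity)).const_mul _

theorem eLpNorm_heatKernel_ne_zero {t : ℝ} (ht : 0 < t) (M : ℝ) {r : ℝ≥0∞} (hr : r ≠ 0) :
    eLpNorm (heatKernel M t) r volume ≠ 0 := by
  rw [Ne, eLpNorm_eq_zero_iff (continuous_heatKernel M t).aestronglyMeasurable hr]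
  intro h
  obtain ⟨z, hz⟩ := h.exists
  exact (heatKernel_pos ht M z).ne' hz

noncomputable def reflectionKernel (a b M η t x y : ℝ) : ℝ :=
  if |y| ≤ a * t then heatKernel M t (x - b * (t - |y| / a)) * exp (-η * max x 0) else 0

theorem abs_reflectionKernel_le {a b M η t : ℝ} (ha : 0 < a) (hη : 0 ≤ η) (ht : 0 ≤ t) (x : ℝ)
    {y : ℝ} (hy : y ≤ 0) :
    |reflectionKernel a b M η t x y| ≤ heatKernel M t (x - b / a * y - b * t) := by
  have hK := heatKernel_nonneg ht M (x - b / a * y - b * t)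
  unfold reflectionKernel
  split_ifs
  · have harg : x - b * (t - |y| / a) = x - b / a * y - b * t := by
      rw [abs_of_nonpos hy]; field_simp; ring
    have hdamp : exp (-η * max x 0) ≤ 1 :=
      exp_le_one_iff.2 (mul_nonpos_of_nonpos_of_nonneg (neg_nonpos.2 hη) (le_max_right x 0))
    rw [harg, abs_of_nonneg (mul_nonneg hK (exp_pos _).le)]
    exact mul_le_of_le_one_right hK hdamp
  · rwa [abs_zero]

theorem enorm_setIntegral_reflectionKernel_mul_le {a b M η t : ℝ} (ha : 0 < a) (hη : 0 ≤ η)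
    (ht : 0 ≤ t) (f : ℝ → ℝ) (x : ℝ) :
    ‖∫ y in Iic 0, reflectionKernel a b M η t x y * f y‖ₑ
      ≤ ∫⁻ y, ‖heatKernel M t (x - b / a * y - b * t)‖ₑ * ‖(Iic 0).indicator f y‖ₑ := by
  calc ‖∫ y in Iic 0, reflectionKernel a b M η t x y * f y‖ₑ
      ≤ ∫⁻ y in Iic 0, ‖reflectionKernel a b M η t x y‖ₑ * ‖f y‖ₑ := by
        simpa only [enorm_mul] using
          enorm_integral_le_lintegral_enorm (fun y => reflectionKernel a b M η t x y * f y)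
    _ ≤ ∫⁻ y in Iic 0, ‖heatKernel M t (x - b / a * y - b * t)‖ₑ * ‖f y‖ₑ := by
        refine setLIntegral_mono' measurableSet_Iic fun y hy => ?_
        gcongr
        rw [Real.enorm_eq_ofReal_abs, Real.enorm_of_nonneg (heatKernel_nonneg ht M _)]
        exact ENNReal.ofReal_le_ofReal (abs_reflectionKernel_le ha hη ht x hy)
    _ = _ := by
        rw [← lintegral_indicator measurableSet_Iic]
        congr 1 with y
        by_cases hy : y ∈ Iic (0 : ℝ) <;> simp [hy]

theorem stmt6 (a b M η : ℝ) (ha : 0 < a) (hb : b ≠ 0) (hM : 0 < M) (hη : 0 < η) :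
    ∀ p q : ℝ≥0∞, 1 ≤ q → q ≤ p →
      ∃ C : ℝ, 0 < C ∧ ∀ t : ℝ, 0 < t →
        ∀ f : ℝ → ℝ, MemLp f q (volume.restrict (Set.Iic (0 : ℝ))) →
          eLpNorm (fun x => ∫ y in Set.Iic (0 : ℝ),
              (if |y| ≤ a * t then
                t ^ (-(1 / 2) : ℝ) * Real.exp (-(x - b * (t - |y| / a)) ^ 2 / (M * t))
                  * Real.exp (-η * max x 0)
              else 0) * f y) p volume
            ≤ ENNReal.ofReal (C * t ^ (-(1 / 2 : ℝ) * (q.toReal⁻¹ - p.toReal⁻¹)))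
              * eLpNorm f q (volume.restrict (Set.Iic (0 : ℝ))) := by
  intro p q hq hqp
  have hc : b / a ≠ 0 := div_ne_zero hb ha.ne'
  set r : ℝ≥0∞ := (1 + p⁻¹ - q⁻¹)⁻¹
  have hq_inv : q⁻¹ ≤ 1 + p⁻¹ := (ENNReal.inv_le_one.2 hq).trans le_self_add
  have hpqr : q⁻¹ + r⁻¹ = 1 + p⁻¹ := by rw [inv_inv, add_tsub_cancel_of_le hq_inv]
  have hr : 1 ≤ r := by
    rw [← ENNReal.inv_le_one, inv_inv, tsub_le_iff_right]
    gcongr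
  have hPQR := ENNReal.toReal_inv_add_toReal_inv_eq (zero_lt_one.trans_le hq).ne'
    (zero_lt_one.trans_le hr).ne' hpqr
  set C : ℝ≥0∞ :=
    ENNReal.ofReal |b / a|⁻¹ ^ (1 - q.toReal⁻¹) * eLpNorm (heatKernel M 1) r volume
  have hC_top : C ≠ ∞ := ENNReal.mul_ne_top
    (ENNReal.rpow_ne_top_of_nonneg (sub_nonneg.2 (ENNReal.toReal_inv_le_one hq))
      ENNReal.ofReal_ne_top)
    (memLp_heatKernel hM one_pos r).eLpNorm_ne_top
  have hC0 : C ≠ 0 := mul_ne_zero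
    (ENNReal.rpow_pos (ENNReal.ofReal_pos.2 (by positivity)) ENNReal.ofReal_ne_top).ne'
    (eLpNorm_heatKernel_ne_zero one_pos M (zero_lt_one.trans_le hr).ne')
  refine ⟨C.toReal, ENNReal.toReal_pos hC0 hC_top, fun t ht f hf => ?_⟩
  calc eLpNorm (fun x => ∫ y in Iic 0, reflectionKernel a b M η t x y * f y) p volume
      ≤ eLpNorm (fun x => ∫⁻ y, ‖heatKernel M t (x - b / a * y - b * t)‖ₑ
          * ‖(Iic 0).indicator f y‖ₑ) p volume :=
        eLpNorm_mono_enorm fun x => enorm_setIntegral_reflectionKernel_mul_le ha hη.le ht.le f x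
    _ ≤ ENNReal.ofReal |b / a|⁻¹ ^ (1 - q.toReal⁻¹)
          * eLpNorm (fun z => heatKernel M t (z - b * t)) r volume
          * eLpNorm ((Iic 0).indicator f) q volume :=
        eLpNorm_lintegral_comp_sub_mul_le (φ := fun z => heatKernel M t (z - b * t))
          ((continuous_heatKernel M t).measurable.comp (measurable_id.sub_const _))
          ((aestronglyMeasurable_indicator_iff measurableSet_Iic).2 hf.1) hc hq hr hpqr
    _ = _ := by
        rw [eLpNorm_heatKernel_comp_sub ht,
          eLpNorm_indicator_eq_eLpNorm_restrict measurableSet_Iic,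
          ENNReal.ofReal_mul ENNReal.toReal_nonneg, ENNReal.ofReal_toReal hC_top,
          show 1 - r.toReal⁻¹ = q.toReal⁻¹ - p.toReal⁻¹ by linarith]
        ring
end

section
/- Let φ : ℝ → ℝ^n be continuously differentiable with φ ∈ L²(ℝ,ℝ^n), φ′ ∈ L²(ℝ,ℝ^n), and ‖φ‖_{L²} > 0, and let Ū : ℝ → ℝ^n be continuously differentiable with Ū′ = φ. Then there exist δ > 0 and C > 0 such that for every W ∈ L²(ℝ,ℝ^n) with ‖W‖_{L²} < δ there exists a unique α ∈ ℝ with |α| ≤ C ‖W‖_{L²} satisfying ∫_ℝ ⟨φ(x), Ū(x+α) − Ū(x) + W(x+α)⟩ dx = 0. -/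
/-!
Write `G α` for the phase-condition integral. By Fubini and the fundamental theorem of calculus,
`G α = ∫ t in 0..α, P t + Q (-α)`, where `P t = ∫ ⟪φ x, φ (x + t)⟫` is the autocorrelation of `φ`
and `Q s = ∫ ⟪W x, φ (x + s)⟫` (the translation is moved from `W` onto `φ`). The same argument
shows that `P` and `Q` are Lipschitz with constants `‖φ‖ ‖φ'‖` and `‖W‖ ‖φ'‖`. Since
`P 0 = ‖φ‖² > 0`, for small `‖W‖` the function `G` increases with slope at least `‖φ‖² / 2` on
`[-r, r]`, `r = 2 ‖W‖ / ‖φ‖`, while `|G 0| ≤ ‖W‖ ‖φ‖`; the intermediate value theorem and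
strict monotonicity give exactly one zero there.
-/

open MeasureTheory Set Filter
open scoped ENNReal RealInnerProductSpace Interval

section Translation

variable {F : Type*} [NormedAddCommGroup F] {p : ℝ≥0∞} {f : ℝ → F}

theorem MeasureTheory.MemLp.comp_add_right (hf : MemLp f p volume) (c : ℝ) :
    MemLp (fun x => f (x + c)) p volume :=
  hf.comp_measurePreserving (measurePreserving_add_right volume c)

theorem eLpNorm_comp_add_right (hf : AEStronglyMeasurable f volume) (c : ℝ) :
    eLpNorm (fun x => f (x + c)) p volume = eLpNorm f p volume :=
  eLpNorm_comp_measurePreserving hf (measurePreserving_add_right volume c)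

end Translation

variable {E : Type*} [NormedAddCommGroup E] [InnerProductSpace ℝ E]

section L2

variable {α : Type*} [MeasurableSpace α] {μ : Measure α} {f g : α → E}

theorem integral_inner_eq_inner_toLp (hf : MemLp f 2 μ) (hg : MemLp g 2 μ) :
    ∫ x, ⟪f x, g x⟫ ∂μ = ⟪hf.toLp f, hg.toLp g⟫ := by
  rw [L2.inner_def]
  refine integral_congr_ae ?_
  filter_upwards [hf.coeFn_toLp, hg.coeFn_toLp] with x hfx hgx
  rw [hfx, hgx]

theorem integrable_inner_of_memLp_two (hf : MemLp f 2 μ) (hg : MemLp g 2 μ) :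
    Integrable (fun x => ⟪f x, g x⟫) μ := by
  refine (L2.integrable_inner (𝕜 := ℝ) (hf.toLp f) (hg.toLp g)).congr ?_
  filter_upwards [hf.coeFn_toLp, hg.coeFn_toLp] with x hfx hgx
  rw [hfx, hgx]

theorem abs_integral_inner_le (hf : MemLp f 2 μ) (hg : MemLp g 2 μ) :
    |∫ x, ⟪f x, g x⟫ ∂μ| ≤ (eLpNorm f 2 μ).toReal * (eLpNorm g 2 μ).toReal := by
  rw [integral_inner_eq_inner_toLp hf hg, ← Lp.norm_toLp f hf, ← Lp.norm_toLp g hg]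
  exact abs_real_inner_le_norm _ _

theorem integral_norm_inner_le (hf : MemLp f 2 μ) (hg : MemLp g 2 μ) :
    ∫ x, ‖⟪f x, g x⟫‖ ∂μ ≤ (eLpNorm f 2 μ).toReal * (eLpNorm g 2 μ).toReal := by
  have hint := integrable_inner_of_memLp_two hf.norm hg.norm
  have hmul := abs_integral_inner_le hf.norm hg.norm
  simp only [eLpNorm_norm, RCLike.inner_apply, conj_trivial] at hint hmul
  exact (integral_mono (integrable_inner_of_memLp_two hf hg).norm hint
    fun x => (norm_inner_le_norm _ _).trans_eq (mul_comm _ _)).trans ((le_abs_self _).trans hmul)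

theorem integral_inner_self_eq_sq (hf : MemLp f 2 μ) :
    ∫ x, ⟪f x, f x⟫ ∂μ = (eLpNorm f 2 μ).toReal ^ 2 := by
  rw [integral_inner_eq_inner_toLp hf hf, real_inner_self_eq_norm_sq, Lp.norm_toLp]

end L2

section ShiftPairing

variable {f ψ u' : ℝ → E}

noncomputable def shiftPairing (ψ f : ℝ → E) (t : ℝ) : ℝ := ∫ x, ⟪ψ x, f (x + t)⟫

theorem shiftPairing_eq_swap (ψ f : ℝ → E) (t : ℝ) :
    shiftPairing ψ f t = shiftPairing f ψ (-t) := by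
  rw [shiftPairing, shiftPairing, ← integral_sub_right_eq_self _ t]
  congr 1 with x
  rw [sub_add_cancel, real_inner_comm, sub_eq_add_neg]

theorem abs_shiftPairing_le (hψ : MemLp ψ 2 volume) (hf : MemLp f 2 volume) (t : ℝ) :
    |shiftPairing ψ f t| ≤ (eLpNorm ψ 2 volume).toReal * (eLpNorm f 2 volume).toReal := by
  rw [← eLpNorm_comp_add_right hf.1 t]
  exact abs_integral_inner_le hψ (hf.comp_add_right t)

theorem shiftPairing_sub_shiftPairing (hψ : MemLp ψ 2 volume) (hf : MemLp f 2 volume) (a b : ℝ) :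
    shiftPairing ψ f b - shiftPairing ψ f a = ∫ x, ⟪ψ x, f (x + b) - f (x + a)⟫ := by
  simp_rw [shiftPairing, inner_sub_right]
  exact (integral_sub (integrable_inner_of_memLp_two hψ (hf.comp_add_right b))
    (integrable_inner_of_memLp_two hψ (hf.comp_add_right a))).symm

theorem integrable_uncurry_inner_comp_add (hu'c : Continuous u') (hu' : MemLp u' 2 volume)
    (hψ : MemLp ψ 2 volume) (a b : ℝ) :
    Integrable (Function.uncurry fun t x => ⟪ψ x, u' (x + t)⟫)
      ((volume.restrict (Ι a b)).prod volume) := by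
  have hmeas : AEStronglyMeasurable (Function.uncurry fun t x => ⟪ψ x, u' (x + t)⟫)
      ((volume.restrict (Ι a b)).prod volume) :=
    hψ.1.comp_snd.inner (hu'c.comp (continuous_snd.add continuous_fst)).aestronglyMeasurable
  refine (integrable_prod_iff hmeas).2 ⟨Eventually.of_forall fun t =>
    integrable_inner_of_memLp_two hψ (hu'.comp_add_right t), ?_⟩
  refine (integrableOn_const (C := (eLpNorm ψ 2 volume).toReal * (eLpNorm u' 2 volume).toReal)
    measure_Ioc_lt_top.ne).mono' hmeas.norm.integral_prod_right' (Eventually.of_forall fun t => ?_)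
  rw [Real.norm_of_nonneg (integral_nonneg fun x => norm_nonneg _),
    ← eLpNorm_comp_add_right hu'.1 t]
  exact integral_norm_inner_le hψ (hu'.comp_add_right t)

end ShiftPairing

section Calculus

variable [CompleteSpace E] {ψ u u' : ℝ → E}

theorem sub_comp_add_eq_intervalIntegral (hu : ∀ x, HasDerivAt u (u' x) x) (hu'c : Continuous u')
    (x a b : ℝ) : u (x + b) - u (x + a) = ∫ t in a..b, u' (x + t) := by
  rw [intervalIntegral.integral_comp_add_left u' x]
  exact (intervalIntegral.integral_eq_sub_of_hasDerivAt (fun y _ => hu y)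
    (hu'c.intervalIntegrable _ _)).symm

theorem inner_sub_comp_add_eq_intervalIntegral (hu : ∀ x, HasDerivAt u (u' x) x)
    (hu'c : Continuous u') (x a b : ℝ) :
    ⟪ψ x, u (x + b) - u (x + a)⟫ = ∫ t in a..b, ⟪ψ x, u' (x + t)⟫ := by
  rw [sub_comp_add_eq_intervalIntegral hu hu'c]
  exact ((innerSL ℝ (ψ x)).intervalIntegral_comp_comm
    ((hu'c.comp (continuous_const_add x)).intervalIntegrable a b)).symm

theorem integrable_inner_sub_comp_add (hu : ∀ x, HasDerivAt u (u' x) x) (hu'c : Continuous u')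
    (hu' : MemLp u' 2 volume) (hψ : MemLp ψ 2 volume) (a b : ℝ) :
    Integrable (fun x => ⟪ψ x, u (x + b) - u (x + a)⟫) volume := by
  simp_rw [inner_sub_comp_add_eq_intervalIntegral hu hu'c,
    intervalIntegral.intervalIntegral_eq_integral_uIoc, smul_eq_mul]
  exact (integrable_uncurry_inner_comp_add hu'c hu' hψ a b).integral_prod_right.const_mul _

theorem integral_inner_sub_comp_add (hu : ∀ x, HasDerivAt u (u' x) x) (hu'c : Continuous u')
    (hu' : MemLp u' 2 volume) (hψ : MemLp ψ 2 volume) (a b : ℝ) :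
    ∫ x, ⟪ψ x, u (x + b) - u (x + a)⟫ = ∫ t in a..b, shiftPairing ψ u' t := by
  simp_rw [inner_sub_comp_add_eq_intervalIntegral hu hu'c]
  exact (intervalIntegral_integral_swap (integrable_uncurry_inner_comp_add hu'c hu' hψ a b)).symm

theorem abs_integral_inner_sub_comp_add_le (hu : ∀ x, HasDerivAt u (u' x) x)
    (hu'c : Continuous u') (hu' : MemLp u' 2 volume) (hψ : MemLp ψ 2 volume) (a b : ℝ) :
    |∫ x, ⟪ψ x, u (x + b) - u (x + a)⟫| ≤
      (eLpNorm ψ 2 volume).toReal * (eLpNorm u' 2 volume).toReal * |b - a| := by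
  rw [integral_inner_sub_comp_add hu hu'c hu' hψ]
  exact intervalIntegral.norm_integral_le_of_norm_le_const fun t _ =>
    (Real.norm_eq_abs _).trans_le (abs_shiftPairing_le hψ hu' t)

theorem abs_shiftPairing_sub_le (hu : ∀ x, HasDerivAt u (u' x) x) (hu'c : Continuous u')
    (hu2 : MemLp u 2 volume) (hu' : MemLp u' 2 volume) (hψ : MemLp ψ 2 volume) (a b : ℝ) :
    |shiftPairing ψ u b - shiftPairing ψ u a| ≤
      (eLpNorm ψ 2 volume).toReal * (eLpNorm u' 2 volume).toReal * |b - a| := by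
  rw [shiftPairing_sub_shiftPairing hψ hu2]
  exact abs_integral_inner_sub_comp_add_le hu hu'c hu' hψ a b

theorem continuous_shiftPairing (hu : ∀ x, HasDerivAt u (u' x) x) (hu'c : Continuous u')
    (hu2 : MemLp u 2 volume) (hu' : MemLp u' 2 volume) (hψ : MemLp ψ 2 volume) :
    Continuous (shiftPairing ψ u) :=
  (LipschitzWith.of_dist_le_mul (K := ⟨_, by positivity⟩) fun b a =>
    abs_shiftPairing_sub_le hu hu'c hu2 hu' hψ a b).continuous

end Calculus

theorem existsUnique_abs_le_and_eq_zero {G : ℝ → ℝ} {m r : ℝ} (hm : 0 < m)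
    (hG : ContinuousOn G (Icc (-r) r))
    (hslope : ∀ a ∈ Icc (-r) r, ∀ b ∈ Icc (-r) r, a ≤ b → m * (b - a) ≤ G b - G a)
    (h0 : |G 0| ≤ m * r) :
    ∃! α, |α| ≤ r ∧ G α = 0 := by
  have hr : 0 ≤ r := nonneg_of_mul_nonneg_right ((abs_nonneg _).trans h0) hm
  have hr_mem : r ∈ Icc (-r) r := ⟨neg_le_self hr, le_rfl⟩
  have hnegr_mem : -r ∈ Icc (-r) r := ⟨le_rfl, neg_le_self hr⟩
  have h0_mem : (0 : ℝ) ∈ Icc (-r) r := ⟨neg_nonpos.2 hr, hr⟩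
  have hmono : StrictMonoOn G (Icc (-r) r) := fun a ha b hb hab => by
    nlinarith [hslope a ha b hb hab.le]
  have hleft := hslope (-r) hnegr_mem 0 h0_mem (neg_nonpos.2 hr)
  have hright := hslope 0 h0_mem r hr_mem hr
  have hsign : (0 : ℝ) ∈ Icc (G (-r)) (G r) :=
    ⟨by linarith [le_abs_self (G 0)], by linarith [neg_abs_le (G 0)]⟩
  obtain ⟨α, hα, hGα⟩ := intermediate_value_Icc (neg_le_self hr) hG hsign
  exact ⟨α, ⟨abs_le.2 hα, hGα⟩, fun β hβ => hmono.injOn (abs_le.1 hβ.1) hα (hβ.2.trans hGα.symm)⟩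

section PhaseCondition

variable [CompleteSpace E] {φ φ' Ubar W : ℝ → E}

noncomputable def phaseCondition (φ Ubar W : ℝ → E) (α : ℝ) : ℝ :=
  ∫ x, ⟪φ x, Ubar (x + α) - Ubar x + W (x + α)⟫

theorem phaseCondition_eq (hUbar : ∀ x, HasDerivAt Ubar (φ x) x) (hφc : Continuous φ)
    (hφ : MemLp φ 2 volume) (hW : MemLp W 2 volume) (α : ℝ) :
    phaseCondition φ Ubar W α = (∫ t in 0..α, shiftPairing φ φ t) + shiftPairing W φ (-α) := by
  have hU := integral_inner_sub_comp_add hUbar hφc hφ hφ 0 α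
  have hUint := integrable_inner_sub_comp_add hUbar hφc hφ hφ 0 α
  simp only [add_zero] at hU hUint
  simp_rw [phaseCondition, inner_add_right]
  rw [integral_add hUint (integrable_inner_of_memLp_two hφ (hW.comp_add_right α)), hU]
  exact congrArg _ (shiftPairing_eq_swap φ W α)

theorem sq_sub_le_shiftPairing_self (hφ : ∀ x, HasDerivAt φ (φ' x) x) (hφ'c : Continuous φ')
    (hφ2 : MemLp φ 2 volume) (hφ' : MemLp φ' 2 volume) (t : ℝ) :
    (eLpNorm φ 2 volume).toReal ^ 2 -
        (eLpNorm φ 2 volume).toReal * (eLpNorm φ' 2 volume).toReal * |t| ≤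
      shiftPairing φ φ t := by
  have h0 : shiftPairing φ φ 0 = (eLpNorm φ 2 volume).toReal ^ 2 := by
    simp only [shiftPairing, add_zero, integral_inner_self_eq_sq hφ2]
  have h := abs_shiftPairing_sub_le hφ hφ'c hφ2 hφ' hφ2 0 t
  rw [h0, sub_zero] at h
  linarith [neg_abs_le (shiftPairing φ φ t - (eLpNorm φ 2 volume).toReal ^ 2)]

theorem continuous_phaseCondition (hUbar : ∀ x, HasDerivAt Ubar (φ x) x)
    (hφ : ∀ x, HasDerivAt φ (φ' x) x) (hφ'c : Continuous φ') (hφ2 : MemLp φ 2 volume)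
    (hφ' : MemLp φ' 2 volume) (hW : MemLp W 2 volume) :
    Continuous (phaseCondition φ Ubar W) := by
  have hφc : Continuous φ := continuous_iff_continuousAt.2 fun x => (hφ x).continuousAt
  have hP := continuous_shiftPairing hφ hφ'c hφ2 hφ' hφ2
  rw [funext (phaseCondition_eq hUbar hφc hφ2 hW)]
  exact (intervalIntegral.continuous_primitive (fun a b => hP.intervalIntegrable a b) 0).add
    ((continuous_shiftPairing hφ hφ'c hφ2 hφ' hW).comp continuous_neg)

theorem mul_sub_le_phaseCondition_sub (hUbar : ∀ x, HasDerivAt Ubar (φ x) x)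
    (hφ : ∀ x, HasDerivAt φ (φ' x) x) (hφ'c : Continuous φ') (hφ2 : MemLp φ 2 volume)
    (hφ' : MemLp φ' 2 volume) (hW : MemLp W 2 volume) {ρ a b : ℝ}
    (ha : -ρ ≤ a) (hab : a ≤ b) (hb : b ≤ ρ) :
    ((eLpNorm φ 2 volume).toReal ^ 2
        - (eLpNorm φ 2 volume).toReal * (eLpNorm φ' 2 volume).toReal * ρ
        - (eLpNorm W 2 volume).toReal * (eLpNorm φ' 2 volume).toReal) * (b - a) ≤
      phaseCondition φ Ubar W b - phaseCondition φ Ubar W a := by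
  set A := (eLpNorm φ 2 volume).toReal
  set B := (eLpNorm φ' 2 volume).toReal
  have hφc : Continuous φ := continuous_iff_continuousAt.2 fun x => (hφ x).continuousAt
  have hP := continuous_shiftPairing hφ hφ'c hφ2 hφ' hφ2
  have hPint : ∫ t in a..b, shiftPairing φ φ t =
      (∫ t in 0..b, shiftPairing φ φ t) - ∫ t in 0..a, shiftPairing φ φ t :=
    (intervalIntegral.integral_interval_sub_left (hP.intervalIntegrable 0 b)
      (hP.intervalIntegrable 0 a)).symm
  have hPlow : (A ^ 2 - A * B * ρ) * (b - a) ≤ ∫ t in a..b, shiftPairing φ φ t := by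
    calc (A ^ 2 - A * B * ρ) * (b - a) = ∫ _ in a..b, (A ^ 2 - A * B * ρ) := by
          rw [intervalIntegral.integral_const, smul_eq_mul, mul_comm]
      _ ≤ ∫ t in a..b, shiftPairing φ φ t :=
          intervalIntegral.integral_mono_on hab intervalIntegrable_const
            (hP.intervalIntegrable a b) fun t ht =>
            le_trans (by gcongr; exact abs_le.2 ⟨by linarith [ht.1], by linarith [ht.2]⟩)
              (sq_sub_le_shiftPairing_self hφ hφ'c hφ2 hφ' t)
  have hV := abs_shiftPairing_sub_le hφ hφ'c hφ2 hφ' hW (-a) (-b)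
  rw [show -b - -a = -(b - a) by ring, abs_neg, abs_of_nonneg (sub_nonneg.2 hab)] at hV
  rw [phaseCondition_eq hUbar hφc hφ2 hW, phaseCondition_eq hUbar hφc hφ2 hW]
  linarith [neg_abs_le (shiftPairing W φ (-b) - shiftPairing W φ (-a))]

end PhaseCondition

theorem stmt17 {n : ℕ} (φ Ubar : ℝ → EuclideanSpace ℝ (Fin n))
    (hφC1 : ContDiff ℝ 1 φ)
    (hφL2 : MemLp φ 2 volume) (hφ'L2 : MemLp (deriv φ) 2 volume)
    (hφpos : 0 < eLpNorm φ 2 volume)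
    (hUbar : ∀ x : ℝ, HasDerivAt Ubar (φ x) x) :
    ∃ δ : ℝ, 0 < δ ∧ ∃ C : ℝ, 0 < C ∧
      ∀ W : ℝ → EuclideanSpace ℝ (Fin n), MemLp W 2 volume →
        eLpNorm W 2 volume < ENNReal.ofReal δ →
        ∃! α : ℝ, |α| ≤ C * (eLpNorm W 2 volume).toReal ∧
          ∫ x, (inner ℝ (φ x) (Ubar (x + α) - Ubar x + W (x + α)) : ℝ) = 0 := by
  have hφ : ∀ x, HasDerivAt φ (deriv φ x) x := fun x =>
    (hφC1.differentiable one_ne_zero x).hasDerivAt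
  have hφ'c : Continuous (deriv φ) := hφC1.continuous_deriv le_rfl
  set A := (eLpNorm φ 2 volume).toReal
  set B := (eLpNorm (deriv φ) 2 volume).toReal
  have hA : 0 < A := ENNReal.toReal_pos hφpos.ne' hφL2.2.ne
  refine ⟨A ^ 2 / (8 * (B + 1)), by positivity, 2 / A, by positivity, fun W hW hWδ => ?_⟩
  set w := (eLpNorm W 2 volume).toReal
  have hw : w * B ≤ A ^ 2 / 8 := by
    have hwδ : w < A ^ 2 / (8 * (B + 1)) := ENNReal.toReal_lt_of_lt_ofReal hWδ
    rw [lt_div_iff₀ (by positivity)] at hwδ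
    nlinarith [ENNReal.toReal_nonneg (a := eLpNorm W 2 volume)]
  refine existsUnique_abs_le_and_eq_zero (G := phaseCondition φ Ubar W) (m := A ^ 2 / 2)
    (by positivity) (continuous_phaseCondition hUbar hφ hφ'c hφL2 hφ'L2 hW).continuousOn
    (fun a ha b hb hab => ?_) ?_
  · refine le_trans ?_ (mul_sub_le_phaseCondition_sub hUbar hφ hφ'c hφL2 hφ'L2 hW ha.1 hab hb.2)
    change _ ≤ (A ^ 2 - A * B * (2 / A * w) - w * B) * (b - a)
    rw [show A * B * (2 / A * w) = 2 * (w * B) by field_simp]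
    exact mul_le_mul_of_nonneg_right (by linarith [sq_nonneg A]) (sub_nonneg.2 hab)
  · rw [phaseCondition_eq hUbar hφC1.continuous hφL2 hW, intervalIntegral.integral_same, zero_add,
      neg_zero, show A ^ 2 / 2 * (2 / A * w) = w * A by field_simp]
    exact abs_shiftPairing_le hW hφL2 0
end
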